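/- Fix $u,v\in\mathbb{R}$, $\rho\in[-1,1]$, $\xi>0$, $\theta,V_0\ge 0$. For $\epsilon>0$ define $d_\epsilon := \sqrt{(1-i\rho\epsilon^{1/2+H}\xi u)^2 - 2(\epsilon^{1/2+H}\xi)^2(iv-\frac{u^2+iu}{2})}$ (principal square root). In the Black–Scholes regime $H>-1/2$, show that the Heston exponent converges: $(\epsilon^{-1/2-H}\theta+\epsilon^{-1-2H}V_0)\xi^{-2}\left((1-i\rho\epsilon^{1/2+H}\xi u-d_\epsilon)T - 2\epsilon\ln\frac{1-g_\epsilon e^{-Td_\epsilon/\epsilon}}{1-g_\epsilon}\right) \to -\frac{V_0}{2}(u^2 - 2i(v-\frac{u}{2}))T$ as $\epsilon\to 0$, where $g_\epsilon=(1-i\rho\epsilon^{1/2+H}\xi u-d_\epsilon)/(1-i\rho\epsilon^{1/2+H}\xi u+d_\epsilon)$. -/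

import Mathlib

/-!
Write `δ = ε^{1/2+H} ξ`, `w = 1 - iρδu` and `b = iv - (u² + iu)/2`, so that `d² = w² - 2δ²b`.
Then `w - d = 2δ²b/(w + d)` and `g = 2δ²b/(w + d)²`, while the prefactor `P` satisfies
`Pδ² = θ ε^{1/2+H} + V0 → V0`. Hence `P(w - d)T → V0 b T` and `Pg` stays bounded. As `d → 1`,
`exp(-Td/ε) → 0`, so the argument of the logarithm is `1 + O(g)` and `2εP log(⋯) = O(ε)`.
-/

open Complex Filter Set

/-- `d_ε` from the explicit Heston characteristic function (principal square root). -/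
noncomputable def dEps (H ξ ρ u v ε : ℝ) : ℂ :=
  ((1 - I * (ρ:ℂ) * ((ε ^ ((1:ℝ)/2 + H) : ℝ) : ℂ) * (ξ:ℂ) * (u:ℂ))^2
    - 2 * (((ε ^ ((1:ℝ)/2 + H) : ℝ) : ℂ) * (ξ:ℂ))^2
        * (I * (v:ℂ) - ((u:ℂ)^2 + I * (u:ℂ)) / 2)) ^ ((1:ℂ)/2)

/-- `g_ε` from the explicit Heston characteristic function. -/
noncomputable def gEps (H ξ ρ u v ε : ℝ) : ℂ :=
  (1 - I * (ρ:ℂ) * ((ε ^ ((1:ℝ)/2 + H) : ℝ) : ℂ) * (ξ:ℂ) * (u:ℂ) - dEps H ξ ρ u v ε)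
    / (1 - I * (ρ:ℂ) * ((ε ^ ((1:ℝ)/2 + H) : ℝ) : ℂ) * (ξ:ℂ) * (u:ℂ) + dEps H ξ ρ u v ε)

open Topology

theorem tendsto_dslope_log_one : Tendsto (dslope log 1) (𝓝 1) (𝓝 1) := by
  have h := (continuousAt_dslope_same.2 (differentiableAt_log one_mem_slitPlane)).tendsto
  rwa [dslope_same, (hasDerivAt_log one_mem_slitPlane).deriv, inv_one] at h

section Asymptotics

variable {α : Type*} {l : Filter α}

theorem tendsto_mul_log_one_sub_mul_div_one_sub {ε P g E : α → ℂ} {a : ℂ}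
    (hε : Tendsto ε l (𝓝 0)) (hg : Tendsto g l (𝓝 0)) (hE : Tendsto E l (𝓝 0))
    (hPg : Tendsto (fun x => P x * g x) l (𝓝 a)) :
    Tendsto (fun x => ε x * P x * log ((1 - g x * E x) / (1 - g x))) l (𝓝 0) := by
  have hg₁ : Tendsto (fun x => 1 - g x) l (𝓝 1) := by
    simpa using tendsto_const_nhds.sub hg
  have hQ : Tendsto (fun x => (1 - g x * E x) / (1 - g x)) l (𝓝 1) := by
    simpa [Pi.div_def] using (tendsto_const_nhds.sub (hg.mul hE)).div hg₁ one_ne_zero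
  have hE₁ : Tendsto (fun x => (1 - E x) / (1 - g x)) l (𝓝 1) := by
    simpa [Pi.div_def] using (tendsto_const_nhds.sub hE).div hg₁ one_ne_zero
  have hlim : Tendsto (fun x => ε x * (P x * g x) * ((1 - E x) / (1 - g x)) *
      dslope log 1 ((1 - g x * E x) / (1 - g x))) l (𝓝 0) := by
    simpa using ((hε.mul hPg).mul hE₁).mul (tendsto_dslope_log_one.comp hQ)
  refine hlim.congr' ?_
  filter_upwards [hg₁.eventually_ne one_ne_zero] with x hx
  have hlog := sub_smul_dslope log 1 ((1 - g x * E x) / (1 - g x))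
  rw [log_one, sub_zero, smul_eq_mul, div_sub_one hx] at hlog
  rw [← hlog]
  field_simp
  ring

theorem tendsto_mul_sub_of_sq_eq {P s w d : α → ℂ} {b c : ℂ}
    (hsq : ∀ᶠ x in l, d x ^ 2 = w x ^ 2 - 2 * s x * b)
    (hw : Tendsto w l (𝓝 1)) (hd : Tendsto d l (𝓝 1))
    (hPs : Tendsto (fun x => P x * s x) l (𝓝 c)) :
    Tendsto (fun x => P x * (w x - d x)) l (𝓝 (c * b)) := by
  have hwd : Tendsto (fun x => w x + d x) l (𝓝 2) := by
    simpa [one_add_one_eq_two] using hw.add hd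
  have hlim := (hPs.mul_const (2 * b)).div hwd two_ne_zero
  rw [mul_div_assoc, mul_div_cancel_left₀ b two_ne_zero] at hlim
  refine hlim.congr' ?_
  filter_upwards [hsq, hwd.eventually_ne two_ne_zero] with x hx hne
  rw [Pi.div_apply, div_eq_iff hne]
  linear_combination P x * hx

theorem tendsto_heston_exponent {P s w d ε E : α → ℂ} {b c T : ℂ}
    (hsq : ∀ᶠ x in l, d x ^ 2 = w x ^ 2 - 2 * s x * b)
    (hw : Tendsto w l (𝓝 1)) (hd : Tendsto d l (𝓝 1))
    (hPs : Tendsto (fun x => P x * s x) l (𝓝 c))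
    (hε : Tendsto ε l (𝓝 0)) (hE : Tendsto E l (𝓝 0)) :
    Tendsto (fun x => P x * ((w x - d x) * T - 2 * ε x *
      log ((1 - (w x - d x) / (w x + d x) * E x) / (1 - (w x - d x) / (w x + d x)))))
      l (𝓝 (c * b * T)) := by
  have hwd : Tendsto (fun x => w x + d x) l (𝓝 2) := by
    simpa [one_add_one_eq_two] using hw.add hd
  have hPwd := tendsto_mul_sub_of_sq_eq hsq hw hd hPs
  have hg : Tendsto (fun x => (w x - d x) / (w x + d x)) l (𝓝 0) := by
    simpa [Pi.div_def] using (hw.sub hd).div hwd two_ne_zero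
  have hPg : Tendsto (fun x => P x * ((w x - d x) / (w x + d x))) l (𝓝 (c * b / 2)) := by
    simpa only [Pi.div_def, mul_div_assoc] using hPwd.div hwd two_ne_zero
  have hlog := tendsto_mul_log_one_sub_mul_div_one_sub hε hg hE hPg
  have hlim := (hPwd.mul_const T).sub (hlog.const_mul 2)
  rw [mul_zero, sub_zero] at hlim
  convert hlim using 2 with x
  ring

end Asymptotics

theorem tendsto_ofReal_rpow_nhdsGT_zero {p : ℝ} (hp : 0 < p) :
    Tendsto (fun ε : ℝ => ((ε ^ p : ℝ) : ℂ)) (𝓝[>] 0) (𝓝 0) := by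
  have h := (Real.continuousAt_rpow_const 0 p (Or.inr hp.le)).tendsto
  rw [Real.zero_rpow hp.ne'] at h
  simpa using (tendsto_nhdsWithin_of_tendsto_nhds h).ofReal

theorem tendsto_cexp_neg_mul_div_nhdsGT_zero {d : ℝ → ℂ} {z : ℂ} {T : ℝ} (hz : 0 < z.re)
    (hd : Tendsto d (𝓝[>] 0) (𝓝 z)) (hT : 0 < T) :
    Tendsto (fun ε : ℝ => exp (-T * d ε / ε)) (𝓝[>] 0) (𝓝 0) := by
  have hre : Tendsto (fun ε : ℝ => -T / ε * (d ε).re) (𝓝[>] 0) atBot :=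
    (tendsto_inv_nhdsGT_zero.const_mul_atTop_of_neg (neg_neg_of_pos hT)).atBot_mul_pos hz
      ((continuous_re.tendsto z).comp hd)
  refine tendsto_exp_comap_re_atBot.comp (tendsto_comap_iff.2 (hre.congr fun ε => ?_))
  rw [Function.comp_apply, show -(T:ℂ) * d ε / ε = ((-T / ε : ℝ) : ℂ) * d ε by push_cast; ring,
    re_ofReal_mul]

namespace Heston

variable (H ξ ρ u v : ℝ)

noncomputable def δ (ε : ℝ) : ℂ := ((ε ^ ((1:ℝ)/2 + H) : ℝ) : ℂ) * ξ

noncomputable def w (ε : ℝ) : ℂ := 1 - I * (ρ:ℂ) * ((ε ^ ((1:ℝ)/2 + H) : ℝ) : ℂ) * (ξ:ℂ) * (u:ℂ)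

noncomputable def b : ℂ := I * (v:ℂ) - ((u:ℂ)^2 + I * (u:ℂ)) / 2

noncomputable def prefactor (θ V0 ε : ℝ) : ℂ :=
  (((ε ^ (-(1:ℝ)/2 - H) * θ + ε ^ (-1 - 2*H) * V0 : ℝ)) : ℂ) * ((ξ:ℂ)^2)⁻¹

theorem dEps_eq (ε : ℝ) :
    dEps H ξ ρ u v ε = (w H ξ ρ u ε ^ 2 - 2 * δ H ξ ε ^ 2 * b u v) ^ (2⁻¹ : ℂ) := by
  rw [← one_div]
  rfl

theorem dEps_sq (ε : ℝ) : dEps H ξ ρ u v ε ^ 2 = w H ξ ρ u ε ^ 2 - 2 * δ H ξ ε ^ 2 * b u v := by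
  rw [dEps_eq]
  exact cpow_ofNat_inv_pow _ 2

variable {H}

theorem tendsto_w (hH : -(1:ℝ)/2 < H) : Tendsto (w H ξ ρ u) (𝓝[>] 0) (𝓝 1) := by
  unfold w
  simpa using tendsto_const_nhds.sub ((((tendsto_ofReal_rpow_nhdsGT_zero (p := 1/2 + H)
    (by linarith)).const_mul (I * ρ)).mul_const (ξ:ℂ)).mul_const (u:ℂ))

theorem tendsto_δ (hH : -(1:ℝ)/2 < H) : Tendsto (δ H ξ) (𝓝[>] 0) (𝓝 0) := by
  unfold δ
  simpa using (tendsto_ofReal_rpow_nhdsGT_zero (p := 1/2 + H) (by linarith)).mul_const (ξ:ℂ)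

theorem tendsto_dEps (hH : -(1:ℝ)/2 < H) : Tendsto (dEps H ξ ρ u v) (𝓝[>] 0) (𝓝 1) := by
  have hrad : Tendsto (fun ε => w H ξ ρ u ε ^ 2 - 2 * δ H ξ ε ^ 2 * b u v) (𝓝[>] 0) (𝓝 1) := by
    simpa using ((tendsto_w ξ ρ u hH).pow 2).sub
      ((((tendsto_δ ξ hH).pow 2).const_mul 2).mul_const (b u v))
  simpa [funext (dEps_eq H ξ ρ u v), Function.comp_def] using
    (continuousAt_cpow_const (b := 2⁻¹) one_mem_slitPlane).tendsto.comp hrad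

theorem prefactor_mul_δ_sq (θ V0 : ℝ) (hξ : ξ ≠ 0) {ε : ℝ} (hε : 0 < ε) :
    prefactor H ξ θ V0 ε * δ H ξ ε ^ 2 = ((θ * ε ^ ((1:ℝ)/2 + H) + V0 : ℝ) : ℂ) := by
  have e₁ : ε ^ (-(1:ℝ)/2 - H) * (ε ^ ((1:ℝ)/2 + H)) ^ 2 = ε ^ ((1:ℝ)/2 + H) := by
    rw [sq, ← mul_assoc, ← Real.rpow_add hε]; norm_num
  have e₂ : ε ^ (-1 - 2*H) * (ε ^ ((1:ℝ)/2 + H)) ^ 2 = 1 := by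
    rw [sq, ← Real.rpow_add hε, ← Real.rpow_add hε, ← Real.rpow_zero ε]
    ring_nf
  have hξ₂ : (ξ:ℂ) ^ 2 ≠ 0 := pow_ne_zero 2 (ofReal_ne_zero.2 hξ)
  calc _ = (((ε ^ (-(1:ℝ)/2 - H) * θ + ε ^ (-1 - 2*H) * V0) * (ε ^ ((1:ℝ)/2 + H)) ^ 2 : ℝ) : ℂ)
        * ((ξ:ℂ)^2)⁻¹ * (ξ:ℂ) ^ 2 := by rw [prefactor, δ]; push_cast; ring
    _ = _ := by
      rw [inv_mul_cancel_right₀ hξ₂]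
      congr 1
      linear_combination θ * e₁ + V0 * e₂

theorem tendsto_prefactor_mul_δ_sq (θ V0 : ℝ) (hξ : ξ ≠ 0) (hH : -(1:ℝ)/2 < H) :
    Tendsto (fun ε => prefactor H ξ θ V0 ε * δ H ξ ε ^ 2) (𝓝[>] 0) (𝓝 (V0 : ℂ)) := by
  have hlim := ((tendsto_ofReal_rpow_nhdsGT_zero (p := 1/2 + H) (by linarith)).const_mul
    (θ:ℂ)).add_const (V0:ℂ)
  rw [mul_zero, zero_add] at hlim
  refine hlim.congr' ?_
  filter_upwards [self_mem_nhdsWithin] with ε hε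
  rw [prefactor_mul_δ_sq ξ θ V0 hξ hε]
  push_cast
  rfl

end Heston

theorem stmt18_general (u v ρ ξ θ V0 T H : ℝ) (hξ : 0 < ξ) (hT : 0 < T) (hH : -(1:ℝ)/2 < H) :
    Tendsto (fun ε : ℝ =>
      (((ε ^ (-(1:ℝ)/2 - H) * θ + ε ^ (-1 - 2*H) * V0 : ℝ)) : ℂ) * ((ξ:ℂ)^2)⁻¹
        * ((1 - I * (ρ:ℂ) * ((ε ^ ((1:ℝ)/2 + H) : ℝ) : ℂ) * (ξ:ℂ) * (u:ℂ)
              - dEps H ξ ρ u v ε) * (T:ℂ)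
            - 2 * (ε:ℂ) * Complex.log
                ((1 - gEps H ξ ρ u v ε * Complex.exp (-(T:ℂ) * dEps H ξ ρ u v ε / (ε:ℂ)))
                  / (1 - gEps H ξ ρ u v ε))))
      (nhdsWithin 0 (Ioi 0))
      (nhds (-(((V0:ℝ) : ℂ) / 2) * ((u:ℂ)^2 - 2 * I * ((v:ℂ) - (u:ℂ)/2)) * (T:ℂ))) := by
  have hd := Heston.tendsto_dEps ξ ρ u v hH
  have hε : Tendsto (fun ε : ℝ => (ε : ℂ)) (𝓝[>] 0) (𝓝 0) := by
    simpa using tendsto_nhdsWithin_of_tendsto_nhds (continuous_ofReal.tendsto 0)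
  rw [show -(((V0:ℝ) : ℂ) / 2) * ((u:ℂ)^2 - 2 * I * ((v:ℂ) - (u:ℂ)/2)) * (T:ℂ)
      = V0 * Heston.b u v * T by rw [Heston.b]; ring]
  exact tendsto_heston_exponent (Eventually.of_forall (Heston.dEps_sq H ξ ρ u v))
    (Heston.tendsto_w ξ ρ u hH) hd (Heston.tendsto_prefactor_mul_δ_sq ξ θ V0 hξ.ne' hH) hε
    (tendsto_cexp_neg_mul_div_nhdsGT_zero (by simp) hd hT)

/-- In the regime `H > -1/2`, the reversionary Heston characteristic exponent
converges to the Black–Scholes exponent as `ε → 0⁺`. -/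
theorem stmt18 (u v ρ ξ θ V0 T H : ℝ) (hρ : ρ ∈ Icc (-1:ℝ) 1) (hξ : 0 < ξ)
    (hθ : 0 ≤ θ) (hV0 : 0 ≤ V0) (hT : 0 < T) (hH : -(1:ℝ)/2 < H) :
    Tendsto (fun ε : ℝ =>
      (((ε ^ (-(1:ℝ)/2 - H) * θ + ε ^ (-1 - 2*H) * V0 : ℝ)) : ℂ) * ((ξ:ℂ)^2)⁻¹
        * ((1 - I * (ρ:ℂ) * ((ε ^ ((1:ℝ)/2 + H) : ℝ) : ℂ) * (ξ:ℂ) * (u:ℂ)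
              - dEps H ξ ρ u v ε) * (T:ℂ)
            - 2 * (ε:ℂ) * Complex.log
                ((1 - gEps H ξ ρ u v ε * Complex.exp (-(T:ℂ) * dEps H ξ ρ u v ε / (ε:ℂ)))
                  / (1 - gEps H ξ ρ u v ε))))
      (nhdsWithin 0 (Ioi 0))
      (nhds (-(((V0:ℝ) : ℂ) / 2) * ((u:ℂ)^2 - 2 * I * ((v:ℂ) - (u:ℂ)/2)) * (T:ℂ))) :=
  stmt18_general u v ρ ξ θ V0 T H hξ hT hH
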